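/- There exists a constant c > 0, depending only on λ and the norm bounds of V, H, R and C (but not on t), such that for all t ≥ 1 and all W₁, W₂ ∈ C: | (f̃_t(W₁) − f̃_{t+1}(W₁)) − (f̃_t(W₂) − f̃_{t+1}(W₂)) | ≤ (c/(t+1)) ‖W₁ − W₂‖_F; that is, the difference function f̃_t − f̃_{t+1} is Lipschitz on C with constant c/(t+1). -/

import Mathlib

open MeasureTheory ProbabilityTheory Filter
open scoped BigOperators

noncomputable section

/-- Vectors in `ℝ^n` with the Euclidean (`ℓ₂`) norm. -/
abbrev Vec (n : ℕ) := EuclideanSpace ℝ (Fin n)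

/-- `F × K` real matrices, normed with the Frobenius norm (Euclidean norm on entries). -/
abbrev Mat (F K : ℕ) := EuclideanSpace ℝ (Fin F × Fin K)

/-- Matrix-vector product `W h`. -/
def matVec {F K : ℕ} (W : Mat F K) (h : Vec K) : Vec F :=
  (WithLp.equiv 2 _).symm (fun i => ∑ j, W (i, j) * h j)

/-- The `ℓ₁` norm of a vector. -/
def l1norm {n : ℕ} (v : Vec n) : ℝ := ∑ i, |v i|

/-- The constraint set `C`: nonnegative matrices whose columns have Euclidean norm at most 1. -/
def Cset (F K : ℕ) : Set (Mat F K) :=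
  {W | (∀ p, 0 ≤ W p) ∧ ∀ j : Fin K, Real.sqrt (∑ i, (W (i, j))^2) ≤ 1}

/-- The constraint set `R = {r : ‖r‖_∞ ≤ M}`. -/
def Rset (F : ℕ) (M : ℝ) : Set (Vec F) := {r | ∀ i, |r i| ≤ M}

/-- `ℓ̃(v, W, h, r) = (1/2) ‖v − W h − r‖₂² + λ ‖r‖₁`. -/
def elltilde {F K : ℕ} (lam : ℝ) (v : Vec F) (W : Mat F K) (h : Vec K) (r : Vec F) : ℝ :=
  (1/2) * ‖v - matVec W h - r‖^2 + lam * l1norm r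

/-- `ℓ(v, W) = min_{(h,r) ∈ H × R} ℓ̃(v, W, h, r)`. -/
def ell {F K : ℕ} (lam : ℝ) (Hs : Set (Vec K)) (Rs : Set (Vec F)) (v : Vec F) (W : Mat F K) : ℝ :=
  sInf ((fun p : Vec K × Vec F => elltilde lam v W p.1 p.2) '' (Hs ×ˢ Rs))

/-- The surrogate `f̃_t(W) = (1/t) ∑_{i=1}^t [(1/2)‖v_i − W h_i − r_i‖₂² + λ‖r_i‖₁]`. -/
def ftilde {F K : ℕ} (lam : ℝ) (v : ℕ → Vec F) (h : ℕ → Vec K) (r : ℕ → Vec F)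
    (t : ℕ) (W : Mat F K) : ℝ :=
  (t : ℝ)⁻¹ * ∑ i ∈ Finset.Icc 1 t, ((1/2) * ‖v i - matVec W (h i) - r i‖^2 + lam * l1norm (r i))

/-- The empirical loss `f_t(W) = (1/t) ∑_{i=1}^t ℓ(v_i, W)`. -/
def femp {F K : ℕ} (lam : ℝ) (Hs : Set (Vec K)) (Rs : Set (Vec F)) (v : ℕ → Vec F)
    (t : ℕ) (W : Mat F K) : ℝ :=
  (t : ℝ)⁻¹ * ∑ i ∈ Finset.Icc 1 t, ell lam Hs Rs (v i) W

/-! On `C` every column has norm at most one, so `‖W‖ ≤ √K` and the residual `v - W h - r`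
has norm at most `B = B_V + √K B_H + B_R`; hence each summand `½‖v - W h - r‖² + λ‖r‖₁` is
`B_H B`-Lipschitz in `W`. The running averages `A_t = t⁻¹ ∑_{i ≤ t} d_i` of any sequence satisfy
`A_t - A_{t+1} = (A_t - d_{t+1}) / (t + 1)`; applied to the differences `d_i` of the summands at
`W₁` and `W₂` this gives the constant `2 B_H B / (t + 1)`. -/

open Finset

def runningAvg (a : ℕ → ℝ) (t : ℕ) : ℝ :=
  (t : ℝ)⁻¹ * ∑ i ∈ Icc 1 t, a i

lemma runningAvg_sub (a b : ℕ → ℝ) (t : ℕ) :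
    runningAvg (a - b) t = runningAvg a t - runningAvg b t := by
  simp only [runningAvg, Pi.sub_apply, sum_sub_distrib, mul_sub]

lemma runningAvg_sub_runningAvg_succ (a : ℕ → ℝ) (t : ℕ) :
    runningAvg a t - runningAvg a (t + 1) = ((t : ℝ) + 1)⁻¹ * (runningAvg a t - a (t + 1)) := by
  simp only [runningAvg, ← insert_Icc_right_eq_Icc_add_one (Nat.le_add_left 1 t),
    sum_insert (by simp : t + 1 ∉ Icc 1 t), Nat.cast_add, Nat.cast_one]
  rcases Nat.eq_zero_or_pos t with rfl | ht
  · simp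
  · field_simp
    ring

lemma abs_runningAvg_le {a : ℕ → ℝ} {t : ℕ} {M : ℝ} (hM : 0 ≤ M)
    (ha : ∀ i ∈ Icc 1 t, |a i| ≤ M) : |runningAvg a t| ≤ M := by
  rcases Nat.eq_zero_or_pos t with rfl | ht
  · simpa [runningAvg] using hM
  have htpos : (0 : ℝ) < t := Nat.cast_pos.mpr ht
  calc |runningAvg a t| = (t : ℝ)⁻¹ * |∑ i ∈ Icc 1 t, a i| := by
        rw [runningAvg, abs_mul, abs_of_pos (inv_pos.mpr htpos)]
    _ ≤ (t : ℝ)⁻¹ * (t * M) := by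
        gcongr
        refine (abs_sum_le_sum_abs _ _).trans ?_
        simpa using sum_le_sum ha
    _ = M := by field_simp

lemma abs_runningAvg_sub_runningAvg_succ_le {a : ℕ → ℝ} {t : ℕ} {M : ℝ}
    (ha : ∀ i ∈ Icc 1 (t + 1), |a i| ≤ M) :
    |runningAvg a t - runningAvg a (t + 1)| ≤ 2 * M / ((t : ℝ) + 1) := by
  have hlast : |a (t + 1)| ≤ M := ha (t + 1) (by simp)
  have havg : |runningAvg a t| ≤ M :=
    abs_runningAvg_le ((abs_nonneg _).trans hlast)
      fun i hi => ha i (Icc_subset_Icc_right (Nat.le_succ t) hi)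
  rw [runningAvg_sub_runningAvg_succ, abs_mul, abs_inv, abs_of_pos (by positivity),
    inv_mul_eq_div]
  gcongr
  linarith [abs_sub (runningAvg a t) (a (t + 1))]

lemma abs_sq_norm_sub_sq_norm_le {E : Type*} [SeminormedAddCommGroup E] (a b : E) :
    |‖a‖ ^ 2 - ‖b‖ ^ 2| ≤ ‖a - b‖ * (‖a‖ + ‖b‖) := by
  rw [sq_sub_sq, abs_mul, abs_of_nonneg (by positivity : 0 ≤ ‖a‖ + ‖b‖), mul_comm]
  gcongr
  exact abs_norm_sub_norm_le a b

lemma matVec_sub_matVec {F K : ℕ} (W₁ W₂ : Mat F K) (h : Vec K) :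
    matVec W₁ h - matVec W₂ h = matVec (W₁ - W₂) h := by
  ext i
  simp [matVec, sub_mul, sum_sub_distrib]

lemma norm_matVec_le {F K : ℕ} (W : Mat F K) (h : Vec K) :
    ‖matVec W h‖ ≤ ‖W‖ * ‖h‖ := by
  refine (pow_le_pow_iff_left₀ (norm_nonneg _) (by positivity) two_ne_zero).mp ?_
  simp only [EuclideanSpace.norm_sq_eq, Real.norm_eq_abs, sq_abs, mul_pow]
  rw [Fintype.sum_prod_type, sum_mul]
  exact sum_le_sum fun i _ => sum_mul_sq_le_sq_mul_sq univ (fun j => W (i, j)) (fun j => h j)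

lemma norm_le_sqrt_of_mem_Cset {F K : ℕ} {W : Mat F K} (hW : W ∈ Cset F K) :
    ‖W‖ ≤ Real.sqrt K := by
  refine (Real.le_sqrt (norm_nonneg _) K.cast_nonneg).mpr ?_
  simp only [EuclideanSpace.norm_sq_eq, Real.norm_eq_abs, sq_abs, Fintype.sum_prod_type_right]
  simpa using sum_le_sum fun j (_ : j ∈ univ) => Real.sqrt_le_one.mp (hW.2 j)

lemma norm_residual_le_of_mem_Cset {F K : ℕ} {W : Mat F K} (hW : W ∈ Cset F K)
    (v : Vec F) (h : Vec K) (r : Vec F) :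
    ‖v - matVec W h - r‖ ≤ ‖v‖ + Real.sqrt K * ‖h‖ + ‖r‖ := by
  have hWh : ‖matVec W h‖ ≤ Real.sqrt K * ‖h‖ :=
    (norm_matVec_le W h).trans (by gcongr; exact norm_le_sqrt_of_mem_Cset hW)
  linarith [norm_sub_le (v - matVec W h) r, norm_sub_le v (matVec W h)]

lemma abs_elltilde_sub_elltilde_le {F K : ℕ} (lam : ℝ) (v : Vec F) (h : Vec K) (r : Vec F)
    {W₁ W₂ : Mat F K} (hW₁ : W₁ ∈ Cset F K) (hW₂ : W₂ ∈ Cset F K) :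
    |elltilde lam v W₁ h r - elltilde lam v W₂ h r|
      ≤ ‖h‖ * (‖v‖ + Real.sqrt K * ‖h‖ + ‖r‖) * ‖W₁ - W₂‖ := by
  set a₁ := v - matVec W₁ h - r
  set a₂ := v - matVec W₂ h - r
  have hdiff : ‖a₁ - a₂‖ ≤ ‖W₁ - W₂‖ * ‖h‖ := by
    have : a₁ - a₂ = -matVec (W₁ - W₂) h := by
      simp only [a₁, a₂, ← matVec_sub_matVec]
      abel
    rw [this, norm_neg]
    exact norm_matVec_le _ _
  have hsum : ‖a₁‖ + ‖a₂‖ ≤ 2 * (‖v‖ + Real.sqrt K * ‖h‖ + ‖r‖) := by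
    linarith [norm_residual_le_of_mem_Cset hW₁ v h r, norm_residual_le_of_mem_Cset hW₂ v h r]
  have hsplit :
      elltilde lam v W₁ h r - elltilde lam v W₂ h r = 1 / 2 * (‖a₁‖ ^ 2 - ‖a₂‖ ^ 2) := by
    simp only [elltilde, a₁, a₂]
    ring
  calc |elltilde lam v W₁ h r - elltilde lam v W₂ h r| = 1 / 2 * |‖a₁‖ ^ 2 - ‖a₂‖ ^ 2| := by
        rw [hsplit, abs_mul, abs_of_pos one_half_pos]
    _ ≤ 1 / 2 * (‖W₁ - W₂‖ * ‖h‖ * (2 * (‖v‖ + Real.sqrt K * ‖h‖ + ‖r‖))) := by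
        gcongr
        exact (abs_sq_norm_sub_sq_norm_le a₁ a₂).trans (by gcongr)
    _ = ‖h‖ * (‖v‖ + Real.sqrt K * ‖h‖ + ‖r‖) * ‖W₁ - W₂‖ := by ring

theorem surrogate_difference_lipschitz_general
    (F K : ℕ)
    (lam : ℝ)
    (Vs : Set (Vec F)) (Hs : Set (Vec K)) (Rs : Set (Vec F))
    (hVb : Bornology.IsBounded Vs) (hHb : Bornology.IsBounded Hs)
    (hRb : Bornology.IsBounded Rs) :
    ∃ c : ℝ, 0 < c ∧
      ∀ (v : ℕ → Vec F) (h : ℕ → Vec K) (r : ℕ → Vec F),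
        (∀ i, 1 ≤ i → v i ∈ Vs) → (∀ i, 1 ≤ i → h i ∈ Hs) → (∀ i, 1 ≤ i → r i ∈ Rs) →
        ∀ t, 1 ≤ t → ∀ W₁ ∈ Cset F K, ∀ W₂ ∈ Cset F K,
          |(ftilde lam v h r t W₁ - ftilde lam v h r (t+1) W₁)
              - (ftilde lam v h r t W₂ - ftilde lam v h r (t+1) W₂)|
            ≤ c / (t+1) * ‖W₁ - W₂‖ := by
  obtain ⟨Bv, hBv, hv_le⟩ := hVb.exists_pos_norm_le
  obtain ⟨Bh, hBh, hh_le⟩ := hHb.exists_pos_norm_le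
  obtain ⟨Br, hBr, hr_le⟩ := hRb.exists_pos_norm_le
  refine ⟨2 * (Bh * (Bv + Real.sqrt K * Bh + Br)), by positivity,
    fun v h r hv hh hr t _ W₁ hW₁ W₂ hW₂ => ?_⟩
  set loss : Mat F K → ℕ → ℝ := fun W i => elltilde lam (v i) W (h i) (r i)
  have hloss : ∀ i ∈ Icc 1 (t + 1),
      |(loss W₁ - loss W₂) i| ≤ Bh * (Bv + Real.sqrt K * Bh + Br) * ‖W₁ - W₂‖ := by
    intro i hi
    have hi : 1 ≤ i := (mem_Icc.mp hi).1
    refine (abs_elltilde_sub_elltilde_le lam (v i) (h i) (r i) hW₁ hW₂).trans ?_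
    have hhi := hh_le _ (hh i hi)
    gcongr
    exacts [hv_le _ (hv i hi), hr_le _ (hr i hi)]
  have hdiff : (ftilde lam v h r t W₁ - ftilde lam v h r (t+1) W₁)
      - (ftilde lam v h r t W₂ - ftilde lam v h r (t+1) W₂)
      = runningAvg (loss W₁ - loss W₂) t - runningAvg (loss W₁ - loss W₂) (t + 1) := by
    have hf : ∀ W s, ftilde lam v h r s W = runningAvg (loss W) s := fun _ _ => rfl
    rw [runningAvg_sub, runningAvg_sub, hf, hf, hf, hf]
    ring
  rw [hdiff, div_mul_eq_mul_div, mul_assoc]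
  exact abs_runningAvg_sub_runningAvg_succ_le hloss

/-- there is a constant `c > 0`, depending only on `λ` and the norm
bounds of `V`, `H`, `R` and `C` (not on `t` or on the particular sequences), such that for
all `t ≥ 1` the difference function `f̃_t − f̃_{t+1}` is Lipschitz on `C` with constant
`c/(t+1)`. -/
theorem surrogate_difference_lipschitz
    (F K : ℕ) (hF : 1 ≤ F) (hK : 1 ≤ K)
    (lam : ℝ) (hlam : 0 < lam)
    (Vs : Set (Vec F)) (Hs : Set (Vec K)) (Rs : Set (Vec F))
    (hVb : Bornology.IsBounded Vs) (hHb : Bornology.IsBounded Hs)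
    (hRb : Bornology.IsBounded Rs) :
    ∃ c : ℝ, 0 < c ∧
      ∀ (v : ℕ → Vec F) (h : ℕ → Vec K) (r : ℕ → Vec F),
        (∀ i, 1 ≤ i → v i ∈ Vs) → (∀ i, 1 ≤ i → h i ∈ Hs) → (∀ i, 1 ≤ i → r i ∈ Rs) →
        ∀ t, 1 ≤ t → ∀ W₁ ∈ Cset F K, ∀ W₂ ∈ Cset F K,
          |(ftilde lam v h r t W₁ - ftilde lam v h r (t+1) W₁)
              - (ftilde lam v h r t W₂ - ftilde lam v h r (t+1) W₂)|
            ≤ c / (t+1) * ‖W₁ - W₂‖ :=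
  surrogate_difference_lipschitz_general F K lam Vs Hs Rs hVb hHb hRb
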